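/- Let 1/2 < α < 1 and c < 0, and let N : ℕ → ℕ satisfy N(d) > d for all d and N(d) - 2d ≤ c·d^α for all sufficiently large d. Then P_{d,N(d)} → 1 as d → ∞. -/

import Mathlib

/-!
Writing `n = N - 1`, the Wendel probability is `P(X < d)` for `X ~ Bin(n, 1/2)`, whose mean is
`n / 2` and whose variance is `n / 4`. When `N ≤ 2d + c d^α` with `c < 0`, the threshold `d`
lies at least `|c| d^α / 2` above the mean, so Chebyshev's inequality bounds `P(X ≥ d)` by
`2 d / (c² d^{2α})`, which tends to `0` because `α > 1/2`.
-/

open Filter Finset Real Topology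

/-- The Wendel probability `P_{d,N} = 2^{1-N} · Σ_{i=0}^{d-1} C(N-1, i)`. -/
noncomputable def wendelP (d N : ℕ) : ℝ :=
  (∑ i ∈ Finset.range d, ((N - 1).choose i : ℝ)) / 2 ^ (N - 1)

theorem sum_range_choose_mul_two_mul_sub_sq (n : ℕ) :
    ∑ i ∈ range (n + 1), (n.choose i : ℝ) * (2 * i - n) ^ 2 = (n : ℝ) * 2 ^ n := by
  induction n with
  | zero => simp
  | succ n ih =>
    -- Pascal's rule, then `(a - 1)² + (a + 1)² = 2a² + 2` with `a = 2i - n`.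
    have hsplit := sum_choose_succ_mul (fun i j => ((i : ℝ) - j) ^ 2) n
    have hlhs : ∀ i ∈ range (n + 1 + 1),
        ((n + 1).choose i : ℝ) * (2 * i - (n + 1 : ℕ)) ^ 2
          = ((n + 1).choose i : ℝ) * ((i : ℝ) - (n + 1 - i : ℕ)) ^ 2 := by
      intro i hi
      rw [Nat.cast_sub (mem_range_succ_iff.mp hi)]
      ring
    have hrhs : ∀ i ∈ range (n + 1),
        (n.choose i : ℝ) * ((i : ℝ) - (n + 1 - i : ℕ)) ^ 2
          + (n.choose i : ℝ) * ((i + 1 : ℕ) - (n - i : ℕ) : ℝ) ^ 2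
          = 2 * ((n.choose i : ℝ) * (2 * i - n) ^ 2) + 2 * n.choose i := by
      intro i hi
      have hin := mem_range_succ_iff.mp hi
      rw [Nat.cast_sub (by omega), Nat.cast_sub hin]
      push_cast
      ring
    rw [sum_congr rfl hlhs, hsplit, ← sum_add_distrib, sum_congr rfl hrhs, sum_add_distrib,
      ← mul_sum, ← mul_sum, ih, ← Nat.cast_sum, Nat.sum_range_choose]
    push_cast
    ring

theorem sum_range_choose_add_sum_filter_choose (n d : ℕ) :
    ∑ i ∈ range d, (n.choose i : ℝ) + ∑ i ∈ range (n + 1) with d ≤ i, (n.choose i : ℝ)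
      = 2 ^ n := by
  have hhead :
      ∑ i ∈ range (n + 1) with i < d, (n.choose i : ℝ) = ∑ i ∈ range d, (n.choose i : ℝ) := by
    refine sum_subset (fun i hi => mem_range.mpr (mem_filter.mp hi).2) fun i hi hi' => ?_
    have : n < i := by simp_all
    simp [Nat.choose_eq_zero_of_lt this]
  rw [← hhead]
  simp only [← not_lt]
  rw [sum_filter_add_sum_filter_not, ← Nat.cast_sum, Nat.sum_range_choose]
  push_cast
  rfl

theorem sq_mul_sum_filter_choose_le (n d : ℕ) (h : n < 2 * d) :
    (2 * d - n : ℝ) ^ 2 * ∑ i ∈ range (n + 1) with d ≤ i, (n.choose i : ℝ) ≤ n * 2 ^ n := by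
  rw [← sum_range_choose_mul_two_mul_sub_sq, mul_sum]
  calc ∑ i ∈ range (n + 1) with d ≤ i, (2 * d - n : ℝ) ^ 2 * n.choose i
      ≤ ∑ i ∈ range (n + 1) with d ≤ i, (n.choose i : ℝ) * (2 * i - n) ^ 2 := by
        refine sum_le_sum fun i hi => ?_
        have hdi : (d : ℝ) ≤ i := by exact_mod_cast (mem_filter.mp hi).2
        have hnd : (n : ℝ) < 2 * d := by exact_mod_cast h
        rw [mul_comm]
        gcongr
    _ ≤ ∑ i ∈ range (n + 1), (n.choose i : ℝ) * (2 * i - n) ^ 2 :=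
        sum_le_sum_of_subset_of_nonneg (filter_subset _ _) fun _ _ _ => by positivity

theorem wendelP_le_one (d N : ℕ) : wendelP d N ≤ 1 := by
  rw [wendelP, div_le_one (by positivity), ← sum_range_choose_add_sum_filter_choose (N - 1) d]
  exact le_add_of_nonneg_right (sum_nonneg fun _ _ => by positivity)

theorem one_sub_div_sq_le_wendelP {d N : ℕ} (h : N < 2 * d) :
    1 - N / (2 * d - N : ℝ) ^ 2 ≤ wendelP d N := by
  rw [wendelP]
  set n := N - 1
  have hnN : (n : ℝ) ≤ N := by exact_mod_cast N.sub_le 1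
  have hNd : (0 : ℝ) < 2 * d - N := by
    rw [sub_pos]; exact_mod_cast h
  have htail : ∑ i ∈ range (n + 1) with d ≤ i, (n.choose i : ℝ) ≤ n * 2 ^ n / (2 * d - n) ^ 2 :=
    (le_div_iff₀' (by nlinarith)).mpr (sq_mul_sum_filter_choose_le n d (by omega))
  have hratio : (n : ℝ) / (2 * d - n) ^ 2 ≤ N / (2 * d - N) ^ 2 := by
    gcongr
  rw [le_div_iff₀ (by positivity)]
  calc (1 - N / (2 * d - N : ℝ) ^ 2) * 2 ^ n ≤ 2 ^ n - n * 2 ^ n / (2 * d - n) ^ 2 := by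
        rw [mul_div_right_comm]; nlinarith [pow_pos (two_pos (α := ℝ)) n]
    _ ≤ _ := by linarith [sum_range_choose_add_sum_filter_choose n d]

theorem tendsto_div_sq_of_sub_le_rpow {α c : ℝ} (hα : 1 / 2 < α) (hc : c < 0) {x : ℕ → ℝ}
    (hx0 : ∀ d, 0 ≤ x d) (hx : ∀ᶠ d : ℕ in atTop, x d - 2 * d ≤ c * (d : ℝ) ^ α) :
    Tendsto (fun d => x d / (2 * d - x d) ^ 2) atTop (𝓝 0) := by
  have hbound : Tendsto (fun d : ℕ => 2 / c ^ 2 * (d : ℝ) ^ (-(2 * α - 1))) atTop (𝓝 0) := by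
    simpa using ((tendsto_rpow_neg_atTop (by linarith : 0 < 2 * α - 1)).comp
      tendsto_natCast_atTop_atTop).const_mul (2 / c ^ 2)
  refine squeeze_zero' (Eventually.of_forall fun d => div_nonneg (hx0 d) (sq_nonneg _)) ?_ hbound
  filter_upwards [hx, eventually_gt_atTop 0] with d hd hd0
  have hd0' : (0 : ℝ) < d := by exact_mod_cast hd0
  have hgap : 0 < -c * (d : ℝ) ^ α := mul_pos (neg_pos.mpr hc) (rpow_pos_of_pos hd0' α)
  have hrpow : (d : ℝ) ^ (-(2 * α - 1)) * ((d : ℝ) ^ α) ^ 2 = d := by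
    rw [← rpow_natCast, ← rpow_mul hd0'.le, ← rpow_add hd0']
    rw [show -(2 * α - 1) + α * (2 : ℕ) = 1 by push_cast; ring, rpow_one]
  calc x d / (2 * d - x d) ^ 2 ≤ 2 * d / (-c * (d : ℝ) ^ α) ^ 2 := by
        gcongr <;> linarith
    _ = 2 / c ^ 2 * (d : ℝ) ^ (-(2 * α - 1)) := by
        field_simp
        rw [mul_comm, hrpow]

theorem wendel_tendsto_one_subcritical_general (α c : ℝ) (hα1 : 1 / 2 < α)
    (hc : c < 0) (N : ℕ → ℕ)
    (h1 : ∀ᶠ d : ℕ in atTop, (N d : ℝ) - 2 * d ≤ c * (d : ℝ) ^ α) :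
    Tendsto (fun d : ℕ => wendelP d (N d)) atTop (𝓝 1) := by
  have htail := tendsto_div_sq_of_sub_le_rpow hα1 hc (fun d => (N d).cast_nonneg) h1
  have hlower : Tendsto (fun d : ℕ => 1 - (N d : ℝ) / (2 * d - N d) ^ 2) atTop (𝓝 1) := by
    simpa using tendsto_const_nhds.sub htail
  refine tendsto_of_tendsto_of_tendsto_of_le_of_le' hlower tendsto_const_nhds ?_
    (Eventually.of_forall fun d => wendelP_le_one d (N d))
  filter_upwards [h1, eventually_gt_atTop 0] with d hd hd0
  have hgap : c * (d : ℝ) ^ α < 0 := mul_neg_of_neg_of_pos hc (rpow_pos_of_pos (by positivity) α)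
  exact one_sub_div_sq_le_wendelP (by exact_mod_cast (by linarith : (N d : ℝ) < 2 * d))

theorem wendel_tendsto_one_subcritical (α c : ℝ) (hα1 : 1 / 2 < α) (hα2 : α < 1)
    (hc : c < 0) (N : ℕ → ℕ) (hN : ∀ d, d < N d)
    (h1 : ∀ᶠ d : ℕ in atTop, (N d : ℝ) - 2 * d ≤ c * (d : ℝ) ^ α) :
    Tendsto (fun d : ℕ => wendelP d (N d)) atTop (𝓝 1) :=
  wendel_tendsto_one_subcritical_general α c hα1 hc N h1
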